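/- Let c(x) = Σ_{n≥0} Cₙ xⁿ be the generating function of the Catalan numbers, which satisfies c(x) = 1 + x·c(x)². Then as formal power series, (1 - (d-1)·x·c(x)) / (1 - d·x·c(x)) = 1 + Σ_{n≥1} aₙ xⁿ where aₙ = (d-1)·𝔉_{n,n-2}(d) + Cₙ for n ≥ 2; equivalently, (1 - (d-1)xc(x)) = (1 - d·x·c(x))·(Σ_{n≥0} bₙ xⁿ) where b₀ = 1 and bₙ = (d-1)·𝔉_{n,n-2}(d) + Cₙ for n ≥ 2. -/

import Mathlib

open PowerSeries

/-- Catalan triangle number `C(n,k) = (n+k)!·(n-k+1)/(k!·(n+1)!)` for `0 ≤ k ≤ n`. -/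
noncomputable def catalanTriangle (n k : ℕ) : ℚ :=
  ((n + k).factorial : ℚ) * ((n - k + 1 : ℕ) : ℚ) /
    ((k.factorial : ℚ) * ((n + 1).factorial : ℚ))

/-- Catalan triangle polynomial `𝔉_{n,k}(x) = Σ_{s=0}^{k} C(n,s)·x^{k-s}`. -/
noncomputable def catalanTrianglePoly (n k : ℕ) (x : ℚ) : ℚ :=
  ∑ s ∈ Finset.range (k + 1), catalanTriangle n s * x ^ (k - s)


open Finset

noncomputable def Gb (n k : ℕ) : ℚ :=
  if k = 0 then (if n = 0 then 1 else 0)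
  else (k : ℚ) * ((2*n+k-1).factorial : ℚ) / ((n.factorial : ℚ) * ((n+k).factorial : ℚ))

lemma fac_ne (n : ℕ) : ((n.factorial : ℚ)) ≠ 0 := by
  exact_mod_cast Nat.factorial_ne_zero n

lemma fac_cast_succ (n : ℕ) : (((n+1).factorial : ℚ)) = (n+1) * (n.factorial : ℚ) := by
  rw [Nat.factorial_succ]; push_cast; ring

lemma Gb_rec (n k : ℕ) : Gb (n+1) (k+1) = Gb (n+1) k + Gb n (k+2) := by
  rcases k with _ | k
  · simp only [Gb, if_neg (Nat.succ_ne_zero _), if_pos rfl, if_neg (Nat.succ_ne_zero _)]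
    have h1 : 2*(n+1)+1-1 = (2*n+1)+1 := by omega
    have h2 : 2*n+2-1 = 2*n+1 := by omega
    rw [h1, h2, fac_cast_succ (2*n+1), show n+1+1 = (n+1)+1 from rfl, fac_cast_succ n,
      fac_cast_succ (n+1)]
    push_cast
    have hn := fac_ne n
    have h2n := fac_ne (2*n+1)
    field_simp
    ring
  · simp only [Gb, if_neg (Nat.succ_ne_zero _)]
    have h1 : 2*(n+1)+(k+1+1)-1 = (2*n+k+2)+1 := by omega
    have h2 : 2*(n+1)+(k+1)-1 = 2*n+k+2 := by omega
    have h3 : 2*n+(k+1+2)-1 = 2*n+k+2 := by omega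
    have h4 : n+1+(k+1+1) = (n+k+2)+1 := by omega
    have h5 : n+1+(k+1) = n+k+2 := by omega
    have h6 : n+(k+1+2) = (n+k+2)+1 := by omega
    rw [h1, h2, h3, h4, h5, h6, fac_cast_succ (2*n+k+2), fac_cast_succ (n+k+2), fac_cast_succ n]
    push_cast
    have e1 := fac_ne n
    have e2 := fac_ne (n+k+2)
    have e3 := fac_ne (2*n+k+2)
    field_simp
    ring

lemma coeff_c_pow (c : PowerSeries ℚ) (h0 : PowerSeries.constantCoeff c = 1)
    (hquad : c = 1 + PowerSeries.X * c ^ 2) :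
    ∀ n k, PowerSeries.coeff n (c ^ k) = Gb n k := by
  intro n
  induction n using Nat.strong_induction_on with
  | _ n ih =>
    rcases n with _ | n
    · intro k
      rw [← PowerSeries.coeff_zero_eq_constantCoeff_apply] at h0
      simp only [PowerSeries.coeff_zero_eq_constantCoeff_apply, map_pow, Gb]
      rcases k with _ | k
      · simp
      · rw [PowerSeries.coeff_zero_eq_constantCoeff_apply] at h0
        rw [h0]
        simp only [one_pow, if_neg (Nat.succ_ne_zero _)]
        rw [show 2*0+(k+1)-1 = k by omega, show 0+(k+1) = k+1 from by omega,
          Nat.factorial_succ, Nat.factorial_zero]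
        push_cast
        rw [eq_div_iff (by positivity)]
        ring
    · intro k
      induction k with
      | zero => simp [Gb]
      | succ k ihk =>
        have key : c ^ (k+1) = c ^ k + PowerSeries.X * c ^ (k+2) := by
          calc c ^ (k+1) = c ^ k * c := by ring
          _ = c ^ k * (1 + PowerSeries.X * c ^ 2) := by rw [← hquad]
          _ = c ^ k + PowerSeries.X * c ^ (k+2) := by ring
        rw [key, map_add, PowerSeries.coeff_succ_X_mul, ihk, ih n (Nat.lt_succ_self n) (k+2),
          Gb_rec]

lemma CT_zero (n : ℕ) : catalanTriangle n 0 = 1 := by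
  simp only [catalanTriangle, Nat.add_zero, Nat.sub_zero, Nat.factorial_zero]
  rw [fac_cast_succ n]
  push_cast
  rw [div_eq_one_iff_eq (by positivity)]
  ring

lemma Gb_zero_succ (m : ℕ) : Gb 0 (m+2) = 1 := by
  simp only [Gb, if_neg (Nat.succ_ne_zero _)]
  rw [show 2*0+(m+2)-1 = (m+1) by omega, show (0:ℕ)+(m+2) = (m+1)+1 by omega,
    fac_cast_succ (m+1), Nat.factorial_zero]
  push_cast
  rw [div_eq_one_iff_eq (by positivity)]
  ring

lemma lemA (m : ℕ) : Gb (m+2) 1 - catalanTriangle (m+2) m = Gb (m+1) 1 := by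
  simp only [Gb, catalanTriangle, if_neg (Nat.one_ne_zero)]
  rw [show 2*(m+2)+1-1 = 2*m+1+1+1+1 by omega, show 2*(m+1)+1-1 = 2*m+1+1 by omega,
    show m+2+m = 2*m+1+1 by omega, show m+2-m+1 = 3 by omega,
    show (m+2)+1 = m+1+1+1 from rfl]
  rw [fac_cast_succ (2*m+1+1+1), fac_cast_succ (2*m+1+1), fac_cast_succ (2*m+1),
    fac_cast_succ (m+1+1), fac_cast_succ (m+1), fac_cast_succ m]
  push_cast
  have e1 := fac_ne m
  have e2 := fac_ne (2*m+1)
  field_simp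
  ring

lemma lemB (k t : ℕ) :
    catalanTriangle (k+t+3) (t+1) - catalanTriangle (k+t+3) t = Gb (t+1) (k+2) := by
  simp only [Gb, catalanTriangle, if_neg (Nat.succ_ne_zero _)]
  rw [show k+t+3+(t+1) = (k+2*t+3)+1 by omega, show k+t+3-(t+1)+1 = k+3 by omega,
    show k+t+3+t = k+2*t+3 by omega, show k+t+3-t+1 = k+4 by omega,
    show (k+t+3)+1 = (k+t+3)+1 from rfl, show 2*(t+1)+(k+2)-1 = k+2*t+3 by omega,
    show t+1+(k+2) = k+t+3 by omega]
  rw [fac_cast_succ (k+2*t+3), fac_cast_succ t, fac_cast_succ (k+t+3)]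
  push_cast
  have e1 := fac_ne t
  have e2 := fac_ne (k+t+3)
  have e3 := fac_ne (k+2*t+3)
  field_simp
  ring

lemma key_sum (d m : ℕ) :
    ∑ k ∈ Finset.range (m+2), (d:ℚ)^k * Gb (m+1-k) (k+1)
      = ((d:ℚ) - 1) * (∑ s ∈ Finset.range (m+1), catalanTriangle (m+2) s * (d:ℚ)^(m-s))
        + Gb (m+2) 1 := by
  have hrefl : (∑ s ∈ Finset.range (m+1), catalanTriangle (m+2) s * (d:ℚ)^(m-s))
      = ∑ k ∈ Finset.range (m+1), catalanTriangle (m+2) (m-k) * (d:ℚ)^k := by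
    rw [← Finset.sum_range_reflect]
    refine Finset.sum_congr rfl fun j hj => ?_
    have hj' : j ≤ m := by simpa [Nat.lt_succ_iff] using hj
    rw [show m+1-1-j = m-j by omega, Nat.sub_sub_self hj']
  set S : ℚ := ∑ k ∈ Finset.range (m+1), catalanTriangle (m+2) (m-k) * (d:ℚ)^k with hS
  rw [hrefl]
  have hL : ∑ k ∈ Finset.range (m+2), (d:ℚ)^k * Gb (m+1-k) (k+1)
      = Gb (m+1) 1 + (∑ k ∈ Finset.range m, (d:ℚ)^(k+1) * Gb (m-k) (k+2)) + (d:ℚ)^(m+1) := by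
    rw [Finset.sum_range_succ, Finset.sum_range_succ' (fun k => (d:ℚ)^k * Gb (m+1-k) (k+1)) m]
    rw [show m+1-(m+1) = 0 by omega, Gb_zero_succ, mul_one, show m+1-0 = m+1 by omega,
      pow_zero, one_mul]
    have heq : ∑ k ∈ Finset.range m, (d:ℚ)^(k+1) * Gb (m+1-(k+1)) (k+1+1)
        = ∑ k ∈ Finset.range m, (d:ℚ)^(k+1) * Gb (m-k) (k+2) := by
      refine Finset.sum_congr rfl fun k hk => ?_
      rw [show m+1-(k+1) = m-k by omega]
    rw [heq]; ring
  have h1 : (d:ℚ) * S = (∑ k ∈ Finset.range m, catalanTriangle (m+2) (m-k) * (d:ℚ)^(k+1))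
      + (d:ℚ)^(m+1) := by
    rw [hS, Finset.mul_sum, Finset.sum_range_succ, Nat.sub_self, CT_zero, one_mul]
    have heq : ∑ k ∈ Finset.range m, (d:ℚ) * (catalanTriangle (m+2) (m-k) * (d:ℚ)^k)
        = ∑ k ∈ Finset.range m, catalanTriangle (m+2) (m-k) * (d:ℚ)^(k+1) := by
      refine Finset.sum_congr rfl fun k hk => ?_
      ring
    rw [heq]; ring
  have h3 : S = (∑ k ∈ Finset.range m, catalanTriangle (m+2) (m-(k+1)) * (d:ℚ)^(k+1))
      + catalanTriangle (m+2) m := by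
    rw [hS, Finset.sum_range_succ' (fun k => catalanTriangle (m+2) (m-k) * (d:ℚ)^k) m]
    rw [Nat.sub_zero, pow_zero, mul_one]
  have hsum : ∑ k ∈ Finset.range m, (d:ℚ)^(k+1) * Gb (m-k) (k+2)
      = ∑ k ∈ Finset.range m, (catalanTriangle (m+2) (m-k) - catalanTriangle (m+2) (m-(k+1)))
          * (d:ℚ)^(k+1) := by
    refine Finset.sum_congr rfl fun k hk => ?_
    have hk' : k < m := Finset.mem_range.1 hk
    obtain ⟨t, rfl⟩ : ∃ t, m = k+t+1 := ⟨m-k-1, by omega⟩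
    rw [show k+t+1-k = t+1 by omega, show k+t+1-(k+1) = t by omega,
      show k+t+1+2 = k+t+3 by omega, lemB]
    ring
  have hsplit : ∑ k ∈ Finset.range m,
        (catalanTriangle (m+2) (m-k) - catalanTriangle (m+2) (m-(k+1))) * (d:ℚ)^(k+1)
      = (∑ k ∈ Finset.range m, catalanTriangle (m+2) (m-k) * (d:ℚ)^(k+1))
        - ∑ k ∈ Finset.range m, catalanTriangle (m+2) (m-(k+1)) * (d:ℚ)^(k+1) := by
    rw [← Finset.sum_sub_distrib]
    exact Finset.sum_congr rfl fun k hk => by ring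
  have hA := lemA m
  rw [hL, hsum, hsplit]
  have hd : ((d:ℚ) - 1) * S = (d:ℚ) * S - S := by ring
  rw [hd, h1, h3]
  linarith [hA]

/-- Generating-function identity for the numbers of fully commutative elements of
`G(d,d,n)`:  `(1 - (d-1)·x·c(x)) = (1 - d·x·c(x))·(Σ bₙ xⁿ)` with `b₀ = 1` and
`bₙ = (d-1)·𝔉_{n,n-2}(d) + Cₙ` for `n ≥ 2`, where `c(x)` is the generating
function of the Catalan numbers, satisfying `c = 1 + x·c²`. -/
theorem genFun_Gddn (d : ℕ) (c : PowerSeries ℚ)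
    (hc : ∀ n : ℕ, PowerSeries.coeff n c = (Nat.choose (2 * n) n : ℚ) / (n + 1))
    (hquad : c = 1 + PowerSeries.X * c ^ 2) :
    ∃ b : PowerSeries ℚ,
      PowerSeries.coeff 0 b = 1 ∧
      (∀ n : ℕ, 2 ≤ n → PowerSeries.coeff n b =
        ((d : ℚ) - 1) * catalanTrianglePoly n (n - 2) d +
          (Nat.choose (2 * n) n : ℚ) / (n + 1)) ∧
      1 - PowerSeries.C ((d : ℚ) - 1) * (PowerSeries.X * c) =
        (1 - PowerSeries.C (d : ℚ) * (PowerSeries.X * c)) * b := by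
  have h0 : PowerSeries.constantCoeff c = 1 := by
    have := hc 0
    simpa using this
  have hGb := coeff_c_pow c h0 hquad
  set u : PowerSeries ℚ := PowerSeries.X * c with hu
  set A : PowerSeries ℚ := 1 - PowerSeries.C (d : ℚ) * u with hAdef
  have hA0 : PowerSeries.constantCoeff A ≠ 0 := by
    rw [hAdef, hu]
    simp
  have hg : A * A⁻¹ = 1 := PowerSeries.mul_inv_cancel A hA0
  set g : PowerSeries ℚ := A⁻¹ with hgdef
  refine ⟨1 + u * g, ?_, ?_, ?_⟩
  · rw [PowerSeries.coeff_zero_eq_constantCoeff_apply]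
    rw [hu]
    simp [mul_assoc]
  · intro n hn
    obtain ⟨m, rfl⟩ : ∃ m, n = m + 2 := ⟨n - 2, by omega⟩
    -- decomposition of u * g
    have hgeo : (1 - PowerSeries.C (d:ℚ) * u) *
        (∑ k ∈ Finset.range (m+2), (PowerSeries.C (d:ℚ) * u) ^ k)
        = 1 - (PowerSeries.C (d:ℚ) * u) ^ (m+2) := by
      have := geom_sum_mul (PowerSeries.C (d:ℚ) * u) (m+2)
      linear_combination -this
    have hdecomp : u * g = (∑ k ∈ Finset.range (m+2), (PowerSeries.C (d:ℚ) * u) ^ k * u)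
        + (PowerSeries.C (d:ℚ) * u) ^ (m+2) * u * g := by
      have hg' : g * A = 1 := by rw [mul_comm]; exact hg
      calc u * g = (((1 - PowerSeries.C (d:ℚ) * u) *
            (∑ k ∈ Finset.range (m+2), (PowerSeries.C (d:ℚ) * u) ^ k)
            + (PowerSeries.C (d:ℚ) * u) ^ (m+2)) * g) * u := by
              rw [hgeo]
              have : (1 - (PowerSeries.C (d:ℚ) * u) ^ (m+2)
                  + (PowerSeries.C (d:ℚ) * u) ^ (m+2)) = 1 := by ring
              rw [this, one_mul]
              ring
      _ = (∑ k ∈ Finset.range (m+2), (PowerSeries.C (d:ℚ) * u) ^ k * u)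
            + (PowerSeries.C (d:ℚ) * u) ^ (m+2) * u * g := by
              rw [← hAdef]
              have : (A * (∑ k ∈ Finset.range (m+2), (PowerSeries.C (d:ℚ) * u) ^ k)
                  + (PowerSeries.C (d:ℚ) * u) ^ (m+2)) * g
                  = (g * A) * (∑ k ∈ Finset.range (m+2), (PowerSeries.C (d:ℚ) * u) ^ k)
                    + (PowerSeries.C (d:ℚ) * u) ^ (m+2) * g := by ring
              rw [this, hg', one_mul, add_mul, Finset.sum_mul]
              ring
    -- coefficient of each summand
    have hterm : ∀ k, PowerSeries.coeff (m+2) ((PowerSeries.C (d:ℚ) * u) ^ k * u)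
        = (d:ℚ)^k * (if k + 1 ≤ m + 2 then Gb (m+2-(k+1)) (k+1) else 0) := by
      intro k
      have : (PowerSeries.C (d:ℚ) * u) ^ k * u
          = PowerSeries.C ((d:ℚ)^k) * (PowerSeries.X ^ (k+1) * c ^ (k+1)) := by
        rw [hu, map_pow]
        ring
      rw [this, PowerSeries.coeff_C_mul, PowerSeries.coeff_X_pow_mul']
      split_ifs with h
      · rw [hGb]
      · rfl
    -- coefficient of the tail is 0
    have htail : PowerSeries.coeff (m+2) ((PowerSeries.C (d:ℚ) * u) ^ (m+2) * u * g) = 0 := by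
      have : (PowerSeries.C (d:ℚ) * u) ^ (m+2) * u * g
          = PowerSeries.X ^ (m+3) *
            (PowerSeries.C ((d:ℚ)^(m+2)) * (c ^ (m+3) * g)) := by
        rw [hu, map_pow]
        ring
      rw [this, PowerSeries.coeff_X_pow_mul']
      rw [if_neg (by omega)]
    have hco : PowerSeries.coeff (m+2) (1 + u * g)
        = ∑ k ∈ Finset.range (m+2), (d:ℚ)^k * Gb (m+1-k) (k+1) := by
      rw [map_add, hdecomp, map_add, map_sum, htail, add_zero]
      rw [PowerSeries.coeff_one, if_neg (by omega), zero_add]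
      refine Finset.sum_congr rfl fun k hk => ?_
      have hk' : k < m + 2 := Finset.mem_range.1 hk
      rw [hterm k, if_pos (by omega), show m+2-(k+1) = m+1-k by omega]
    rw [hco, key_sum d m]
    have hcat : Gb (m+2) 1 = (Nat.choose (2 * (m+2)) (m+2) : ℚ) / ((m+2 : ℕ) + 1) := by
      rw [← hGb (m+2) 1, pow_one, hc (m+2)]
    rw [hcat, catalanTrianglePoly, show m+2-2 = m by omega]
  · rw [mul_add, mul_one]
    have h2 : A * (u * g) = (A * g) * u := by ring
    rw [h2, hg, one_mul, hAdef, map_sub, map_one]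
    ring
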